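/- arXiv:1105.2421 — 5 statements merged into one kernel-verified Lean document; each statement's English description precedes it below -/
import Mathlib

section
/- With R̃ an m×n integer matrix, B̃ = R̃ᵗʳ − R̃, where R̃ᵗʳ denotes the m×n matrix built from the opposite extension data, restricted to the first n rows so that its principal n×n part is the transpose of that of R̃, Λ skew-symmetric with Λ(−B̃) = [Iₙ; 0], and Ĩ = [Iₙ; 0], one has for all vectors m, e ∈ ℤⁿ: Λ((Ĩ − R̃)m, B̃e) = −⟨e, m⟩, where ⟨e, m⟩ = eᵗʳ(Iₙ − R)m, R is the principal n×n part of R̃, and Λ(x,y) denotes xᵗʳΛy. -/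
open Matrix

/-- Lam((Ĩ−R̃)m, B̃e) = −⟨e,m⟩ where ⟨e,m⟩ = eᵗʳ(Iₙ−R)m. -/
theorem stmt1 (m n : ℕ) (hmn : n ≤ m)
    (Lam : Matrix (Fin m) (Fin m) ℤ)
    (Rt Bt It : Matrix (Fin m) (Fin n) ℤ)
    (R : Matrix (Fin n) (Fin n) ℤ)
    (hIt : It = Matrix.of fun (i : Fin m) (j : Fin n) => if (i : ℕ) = (j : ℕ) then (1 : ℤ) else 0)
    (hLam : Lamᵀ = -Lam)
    (hB : Lam * Bt = -It)
    (hR : ∀ i j : Fin n, R i j = Rt (Fin.castLE hmn i) j)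
    (hBR : ∀ i j : Fin n, Bt (Fin.castLE hmn i) j
        = Rt (Fin.castLE hmn j) i - Rt (Fin.castLE hmn i) j)
    (mv ev : Fin n → ℤ) :
    ((It - Rt).mulVec mv) ⬝ᵥ Lam.mulVec (Bt.mulVec ev)
      = -(ev ⬝ᵥ (1 - R).mulVec mv) := by
  classical
  rw [mulVec_mulVec, hB, neg_mulVec, dotProduct_neg, neg_inj]
  have hIt' : ∀ (v : Fin n → ℤ) (i : Fin m),
      It.mulVec v i = if h : (i : ℕ) < n then v ⟨i, h⟩ else 0 := by
    intro v i
    subst hIt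
    simp only [mulVec, dotProduct, of_apply, ite_mul, one_mul, zero_mul]
    split
    · next h =>
      rw [Finset.sum_eq_single (⟨(i : ℕ), h⟩ : Fin n)]
      · simp
      · intro b _ hb
        rw [if_neg]
        intro hib
        exact hb (by ext; simp [hib.symm])
      · simp
    · next h =>
      apply Finset.sum_eq_zero
      intro j _
      rw [if_neg]
      intro hij
      exact h (hij ▸ j.isLt)
  have key : ∀ i : Fin m, ((It - Rt).mulVec mv i) * (It.mulVec ev i)
      = if h : (i : ℕ) < n then ev ⟨i, h⟩ * ((1 - R).mulVec mv ⟨i, h⟩) else 0 := by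
    intro i
    rw [hIt']
    split
    · next h =>
      rw [mul_comm]
      congr 1
      simp only [mulVec, dotProduct, Matrix.sub_apply, Matrix.one_apply]
      apply Finset.sum_congr rfl
      intro j _
      have : Fin.castLE hmn ⟨(i : ℕ), h⟩ = i := rfl
      rw [hR ⟨(i : ℕ), h⟩ j, this, hIt]
      congr 2
      simp [Fin.ext_iff]
    · simp
  calc (It - Rt).mulVec mv ⬝ᵥ It.mulVec ev
      = ∑ i : Fin m, if h : (i : ℕ) < n then ev ⟨i, h⟩ * ((1 - R).mulVec mv ⟨i, h⟩) else 0 := by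
        simp only [dotProduct]; exact Finset.sum_congr rfl fun i _ => key i
    _ = ∑ i : Fin n, ev i * ((1 - R).mulVec mv i) := by
        rw [← Finset.sum_subset
            (Finset.subset_univ ((Finset.univ : Finset (Fin n)).map (Fin.castLEEmb hmn)))
            (fun i _ hi => by
              rw [dif_neg]
              intro h
              exact hi (Finset.mem_map.mpr ⟨⟨(i : ℕ), h⟩, Finset.mem_univ _, by ext; rfl⟩)),
          Finset.sum_map]
        apply Finset.sum_congr rfl
        intro j _
        rw [dif_pos (by exact j.isLt)]
        rfl
    _ = ev ⬝ᵥ (1 - R).mulVec mv := rfl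
end

section
/- Under the same compatibility assumptions, for all e, f ∈ ℤⁿ: Λ(B̃e, B̃f) = ⟨e, f⟩ − ⟨f, e⟩. -/
open Matrix

/-!
Since `Λ B̃ = -I`, the form `Λ(B̃e, B̃f)` collapses to `-(B e) ⬝ᵥ f`, where `B = Iᵀ B̃` is the
principal part of `B̃`. Substituting `B = Rᵀ - R` gives `eᵀ Rᵀ f - eᵀ R f`, which is exactly the
antisymmetrization `⟨e, f⟩ - ⟨f, e⟩` of the Euler form `⟨e, f⟩ = eᵀ (1 - R) f`.
-/

namespace Matrix

variable {α : Type*}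

theorem transpose_of_castLE_indicator_mul [Semiring α] {m n k : ℕ} (h : n ≤ m)
    (A : Matrix (Fin m) (Fin k) α) :
    (of fun (i : Fin m) (j : Fin n) => if (i : ℕ) = (j : ℕ) then (1 : α) else 0)ᵀ * A
      = A.submatrix (Fin.castLE h) id := by
  ext i j
  have hcast (l : Fin m) : ((l : ℕ) = (i : ℕ)) ↔ l = Fin.castLE h i := by
    simp [Fin.ext_iff]
  simp [mul_apply, hcast]

theorem dotProduct_mulVec_sub_dotProduct_mulVec_swap [CommRing α] {n : Type*} [Fintype n]
    (M : Matrix n n α) (e f : n → α) :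
    e ⬝ᵥ M *ᵥ f - f ⬝ᵥ M *ᵥ e = (Mᵀ - M) *ᵥ e ⬝ᵥ f := by
  rw [sub_mulVec, sub_dotProduct, mulVec_transpose, ← dotProduct_mulVec, dotProduct_comm _ f]

theorem mulVec_dotProduct_mulVec_of_mul_eq_neg [CommRing α] {m n : Type*} [Fintype m] [Fintype n]
    {Lam : Matrix m m α} {Bt It : Matrix m n α} (hB : Lam * Bt = -It) (e f : n → α) :
    Bt *ᵥ e ⬝ᵥ Lam *ᵥ Bt *ᵥ f = -((Itᵀ * Bt) *ᵥ e ⬝ᵥ f) := by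
  rw [mulVec_mulVec, hB, neg_mulVec, dotProduct_neg, dotProduct_mulVec, ← mulVec_transpose,
    ← mulVec_mulVec]

end Matrix

theorem stmt2_general (m n : ℕ) (hmn : n ≤ m)
    (Lam : Matrix (Fin m) (Fin m) ℤ)
    (Rt Bt It : Matrix (Fin m) (Fin n) ℤ)
    (R : Matrix (Fin n) (Fin n) ℤ)
    (hIt : It = Matrix.of fun (i : Fin m) (j : Fin n) => if (i : ℕ) = (j : ℕ) then (1 : ℤ) else 0)
    (hB : Lam * Bt = -It)
    (hR : ∀ i j : Fin n, R i j = Rt (Fin.castLE hmn i) j)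
    (hBR : ∀ i j : Fin n, Bt (Fin.castLE hmn i) j
        = Rt (Fin.castLE hmn j) i - Rt (Fin.castLE hmn i) j)
    (ev fv : Fin n → ℤ) :
    (Bt.mulVec ev) ⬝ᵥ Lam.mulVec (Bt.mulVec fv)
      = ev ⬝ᵥ (1 - R).mulVec fv - fv ⬝ᵥ (1 - R).mulVec ev := by
  have principal_part : Itᵀ * Bt = Rᵀ - R := by
    rw [hIt, transpose_of_castLE_indicator_mul hmn]
    ext i j
    simp [hBR, hR]
  rw [mulVec_dotProduct_mulVec_of_mul_eq_neg hB, principal_part,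
    dotProduct_mulVec_sub_dotProduct_mulVec_swap, transpose_sub, transpose_one,
    sub_sub_sub_cancel_left, ← neg_sub, neg_mulVec, neg_dotProduct, neg_neg]

/-- Lam(B̃e, B̃f) = ⟨e,f⟩ − ⟨f,e⟩. -/
theorem stmt2 (m n : ℕ) (hmn : n ≤ m)
    (Lam : Matrix (Fin m) (Fin m) ℤ)
    (Rt Bt It : Matrix (Fin m) (Fin n) ℤ)
    (R : Matrix (Fin n) (Fin n) ℤ)
    (hIt : It = Matrix.of fun (i : Fin m) (j : Fin n) => if (i : ℕ) = (j : ℕ) then (1 : ℤ) else 0)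
    (hLam : Lamᵀ = -Lam)
    (hB : Lam * Bt = -It)
    (hR : ∀ i j : Fin n, R i j = Rt (Fin.castLE hmn i) j)
    (hBR : ∀ i j : Fin n, Bt (Fin.castLE hmn i) j
        = Rt (Fin.castLE hmn j) i - Rt (Fin.castLE hmn i) j)
    (ev fv : Fin n → ℤ) :
    (Bt.mulVec ev) ⬝ᵥ Lam.mulVec (Bt.mulVec fv)
      = ev ⬝ᵥ (1 - R).mulVec fv - fv ⬝ᵥ (1 - R).mulVec ev :=
  stmt2_general m n hmn Lam Rt Bt It R hIt hB hR hBR ev fv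
end

section
/- Under the same compatibility assumptions, for all m, l, e, f ∈ ℤⁿ: Λ(B̃e − (Ĩ−R̃)m, B̃f − (Ĩ−R̃)l) = Λ((Ĩ−R̃)m, (Ĩ−R̃)l) + ⟨e,f⟩ − ⟨f,e⟩ − ⟨e,l⟩ + ⟨f,m⟩. -/
/-!
Skew-symmetry of `Λ` and `Λ B̃ = -Ĩ` give `B̃ᵀ Λ = Ĩᵀ`, and `Ĩᵀ` extracts the principal `n × n` part
of an `m × n` matrix. Hence `Ĩᵀ B̃ = Rᵀ - R = (1 - R) - (1 - R)ᵀ` and `Ĩᵀ (Ĩ - R̃) = 1 - R`, and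
after expanding the left-hand side bilinearly every pairing except `Λ((Ĩ-R̃)m, (Ĩ-R̃)l)` becomes an
Euler form.
-/

open Matrix

namespace Matrix

variable {α : Type*}

theorem mulVec_dotProduct_mulVec_mulVec [CommSemiring α] {k l p q : Type*}
    [Fintype k] [Fintype l] [Fintype p] [Fintype q] (X : Matrix k p α) (A : Matrix k l α)
    (Y : Matrix l q α) (u : p → α) (v : q → α) :
    (X *ᵥ u) ⬝ᵥ (A *ᵥ (Y *ᵥ v)) = u ⬝ᵥ (Xᵀ * A * Y) *ᵥ v := by
  rw [← mulVec_mulVec, ← mulVec_mulVec, dotProduct_transpose_mulVec, dotProduct_comm]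

theorem transpose_mul_of_mul_eq_neg [CommRing α] {k p : Type*} [Fintype k]
    {Λ : Matrix k k α} {B C : Matrix k p α} (hΛ : Λᵀ = -Λ) (hB : Λ * B = -C) :
    Bᵀ * Λ = Cᵀ := by
  calc Bᵀ * Λ = -(Bᵀ * Λᵀ) := by rw [hΛ, Matrix.mul_neg, neg_neg]
    _ = Cᵀ := by rw [← transpose_mul, hB, transpose_neg, neg_neg]

theorem transpose_mul_eq_submatrix_castLE [Semiring α] {m n : ℕ} {ι : Type*} (hmn : n ≤ m)
    (X : Matrix (Fin m) ι α) :
    (of fun (i : Fin m) (j : Fin n) => if (i : ℕ) = (j : ℕ) then (1 : α) else 0)ᵀ * X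
      = X.submatrix (Fin.castLE hmn) id := by
  ext i j
  simp only [mul_apply, transpose_apply, of_apply, submatrix_apply, id, ite_mul, one_mul,
    zero_mul]
  rw [Finset.sum_eq_single (Fin.castLE hmn i)]
  · simp
  · intro b _ hb
    exact if_neg fun h => hb (Fin.ext h)
  · simp

end Matrix

/-- Lam(B̃e − (Ĩ−R̃)m, B̃f − (Ĩ−R̃)l)
      = Lam((Ĩ−R̃)m, (Ĩ−R̃)l) + ⟨e,f⟩ − ⟨f,e⟩ − ⟨e,l⟩ + ⟨f,m⟩. -/
theorem stmt3 (m n : ℕ) (hmn : n ≤ m)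
    (Lam : Matrix (Fin m) (Fin m) ℤ)
    (Rt Bt It : Matrix (Fin m) (Fin n) ℤ)
    (R : Matrix (Fin n) (Fin n) ℤ)
    (hIt : It = Matrix.of fun (i : Fin m) (j : Fin n) => if (i : ℕ) = (j : ℕ) then (1 : ℤ) else 0)
    (hLam : Lamᵀ = -Lam)
    (hB : Lam * Bt = -It)
    (hR : ∀ i j : Fin n, R i j = Rt (Fin.castLE hmn i) j)
    (hBR : ∀ i j : Fin n, Bt (Fin.castLE hmn i) j
        = Rt (Fin.castLE hmn j) i - Rt (Fin.castLE hmn i) j)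
    (mv lv ev fv : Fin n → ℤ) :
    (Bt.mulVec ev - (It - Rt).mulVec mv) ⬝ᵥ
        Lam.mulVec (Bt.mulVec fv - (It - Rt).mulVec lv)
      = ((It - Rt).mulVec mv) ⬝ᵥ Lam.mulVec ((It - Rt).mulVec lv)
        + ev ⬝ᵥ (1 - R).mulVec fv - fv ⬝ᵥ (1 - R).mulVec ev
        - ev ⬝ᵥ (1 - R).mulVec lv + fv ⬝ᵥ (1 - R).mulVec mv := by
  have hItIt : Itᵀ * It = 1 := by
    rw [hIt, transpose_mul_eq_submatrix_castLE hmn]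
    ext i j
    simp [one_apply, Fin.ext_iff]
  have hItIR : Itᵀ * (It - Rt) = 1 - R := by
    rw [Matrix.mul_sub, hItIt, hIt, transpose_mul_eq_submatrix_castLE hmn]
    congr 1
    ext i j
    exact (hR i j).symm
  have hItB : Itᵀ * Bt = (1 - R) - (1 - R)ᵀ := by
    rw [hIt, transpose_mul_eq_submatrix_castLE hmn]
    ext i j
    simp [hBR, hR]
  have hBLam : Btᵀ * Lam = Itᵀ := transpose_mul_of_mul_eq_neg hLam hB
  have hIRLamB : (It - Rt)ᵀ * Lam * Bt = -(1 - R)ᵀ := by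
    rw [Matrix.mul_assoc, hB, Matrix.mul_neg, ← hItIR, transpose_mul, transpose_transpose]
  calc _ = ev ⬝ᵥ (Btᵀ * Lam * Bt) *ᵥ fv - ev ⬝ᵥ (Btᵀ * Lam * (It - Rt)) *ᵥ lv
          - mv ⬝ᵥ ((It - Rt)ᵀ * Lam * Bt) *ᵥ fv
          + ((It - Rt) *ᵥ mv) ⬝ᵥ Lam *ᵥ ((It - Rt) *ᵥ lv) := by
        simp only [sub_dotProduct, mulVec_sub, dotProduct_sub, mulVec_dotProduct_mulVec_mulVec]
        ring
    _ = _ := by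
        rw [hBLam, hItB, hItIR, hIRLamB, sub_mulVec, dotProduct_sub, neg_mulVec, dotProduct_neg,
          dotProduct_transpose_mulVec, dotProduct_transpose_mulVec]
        ring
end

section
/- In the quantum torus on ℤ⁴ with skew-symmetric form Λ = [[0,0,−1,0],[0,0,0,−1],[1,0,0,−2],[0,1,2,0]] (so X^a X^b = q^{Λ(a,b)/2} X^{a+b}), setting X_{S₁} = X^{(−1,0,1,0)} + X^{(−1,2,0,0)}, X_{S₂} = X^{(0,−1,0,0)} + X^{(2,−1,0,1)}, and X_δ = X^{(1,−1,1,1)} + X^{(−1,1,0,0)} + X^{(−1,−1,1,0)}, one has X_{S₁}X_{S₂} − X_δ = q^{−1/2} X₁X₂X₄, where X_i = X^{e_i} and X₁X₂X₄ is the ordered product. -/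
open Matrix LaurentPolynomial

/-- The multiplication of the based quantum torus over ℤ[q^{±1/2}] (with q^{1/2}
realized as the Laurent variable T): X^e X^f = q^{Λ(e,f)/2} X^{e+f}. -/
noncomputable def qtMul {L : Type*} [AddCommGroup L] (Lf : L → L → ℤ)
    (x y : L →₀ LaurentPolynomial ℤ) : L →₀ LaurentPolynomial ℤ :=
  x.sum fun e a => y.sum fun f b =>
    Finsupp.single (e + f) (LaurentPolynomial.T (Lf e f) * a * b)

/-- The basis element X^v of the quantum torus on ℤ⁴. -/
noncomputable def X13 (v : Fin 4 → ℤ) : (Fin 4 → ℤ) →₀ LaurentPolynomial ℤ :=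
  Finsupp.single v 1

/-- The skew-symmetric matrix Λ of the Kronecker ice quiver. -/
def Lam13 : Matrix (Fin 4) (Fin 4) ℤ :=
  !![0,0,-1,0; 0,0,0,-1; 1,0,0,-2; 0,1,2,0]


lemma qtMul_single {L : Type*} [AddCommGroup L] (Lf : L → L → ℤ) (e f : L)
    (a b : LaurentPolynomial ℤ) :
    qtMul Lf (Finsupp.single e a) (Finsupp.single f b)
      = Finsupp.single (e + f) (LaurentPolynomial.T (Lf e f) * a * b) := by
  classical
  unfold qtMul
  rw [Finsupp.sum_single_index, Finsupp.sum_single_index]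
  · simp
  · simp

lemma qtMul_add_left {L : Type*} [AddCommGroup L] (Lf : L → L → ℤ)
    (x x' y : L →₀ LaurentPolynomial ℤ) :
    qtMul Lf (x + x') y = qtMul Lf x y + qtMul Lf x' y := by
  classical
  unfold qtMul
  rw [Finsupp.sum_add_index] <;> simp [add_mul, mul_add, Finsupp.sum_add,
    Finsupp.single_add, mul_assoc]

lemma qtMul_add_right {L : Type*} [AddCommGroup L] (Lf : L → L → ℤ)
    (x y y' : L →₀ LaurentPolynomial ℤ) :
    qtMul Lf x (y + y') = qtMul Lf x y + qtMul Lf x y' := by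
  classical
  unfold qtMul
  rw [← Finsupp.sum_add]
  congr 1; funext e a
  rw [Finsupp.sum_add_index] <;> simp [mul_add, Finsupp.single_add, mul_assoc]

lemma lamval (e f : Fin 4 → ℤ) :
    e ⬝ᵥ Lam13.mulVec f
      = -(e 0) * f 2 - e 1 * f 3 + e 2 * f 0 - 2 * e 2 * f 3 + e 3 * f 1
        + 2 * e 3 * f 2 := by
  simp [Lam13, Matrix.mulVec, dotProduct, Fin.sum_univ_four]
  ring

lemma vadd13 (a b c d a' b' c' d' : ℤ) :
    (![a,b,c,d] + ![a',b',c',d'] : Fin 4 → ℤ) = ![a+a',b+b',c+c',d+d'] := by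
  funext i; fin_cases i <;> simp

/-- Lemma 5.4: with X_{S₁} = X^{(−1,0,1,0)} + X^{(−1,2,0,0)},
X_{S₂} = X^{(0,−1,0,0)} + X^{(2,−1,0,1)},
X_δ = X^{(1,−1,1,1)} + X^{(−1,1,0,0)} + X^{(−1,−1,1,0)}, one has
X_{S₁}X_{S₂} − X_δ = q^{−1/2} X₁X₂X₄ in the quantum torus (q^{−1/2} = T(−1)). -/
theorem stmt13 :
    qtMul (fun a b => a ⬝ᵥ Lam13.mulVec b)
        (X13 ![-1,0,1,0] + X13 ![-1,2,0,0])
        (X13 ![0,-1,0,0] + X13 ![2,-1,0,1])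
      - (X13 ![1,-1,1,1] + X13 ![-1,1,0,0] + X13 ![-1,-1,1,0])
      = (LaurentPolynomial.T (-1) : LaurentPolynomial ℤ) •
        qtMul (fun a b => a ⬝ᵥ Lam13.mulVec b) (X13 ![1,0,0,0])
          (qtMul (fun a b => a ⬝ᵥ Lam13.mulVec b) (X13 ![0,1,0,0])
            (X13 ![0,0,0,1])) := by
  unfold X13
  rw [qtMul_add_left, qtMul_add_right, qtMul_add_right]
  rw [qtMul_single, qtMul_single, qtMul_single, qtMul_single, qtMul_single,
    qtMul_single]
  simp only [lamval, vadd13, Matrix.cons_val_zero, Matrix.cons_val_one,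
    Matrix.head_cons, Matrix.cons_val_two, Matrix.tail_cons, Matrix.cons_val_three]
  norm_num only []
  simp only [mul_one, one_mul, T_zero, Finsupp.smul_single, smul_eq_mul, ← T_add]
  norm_num only []
  abel
end

section
/- Let Q be a tame quiver of type Ã_{r,s} with minimal imaginary root δ = (1,…,1). Let E⁽⁰⁾₁[s] be the indecomposable regular module of dimension vector δ in the non-homogeneous tube T₀ with quasi-socle E⁽⁰⁾₁, and E(λ) a degree-1 regular simple in a homogeneous tube. Then for every dimension vector e, |Gr_e(E⁽⁰⁾₁[s])| = |Gr_e(E(λ))| + |Gr_{e − dim S_{r+2}}(E⁽⁰⁾₂[s−2])|, where Gr_e(M) is the set of submodules of M of dimension vector e. -/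
open Matrix

/-- A finite-dimensional representation of a quiver with vertex set `V` and
arrow set `A` (source `src`, target `tgt`) over a field `k`: a dimension at
each vertex and a matrix for each arrow. -/
structure FinRep (k : Type) [Field k] (V A : Type) (src tgt : A → V) where
  dim : V → ℕ
  mat : ∀ a : A, Matrix (Fin (dim (tgt a))) (Fin (dim (src a))) k

/-- A subrepresentation: a subspace at each vertex, stable under all arrows. -/
structure SubRep {k : Type} [Field k] {V A : Type} {src tgt : A → V}
    (M : FinRep k V A src tgt) where
  sub : ∀ v : V, Submodule k (Fin (M.dim v) → k)
  compat : ∀ a : A, ∀ x ∈ sub (src a), (M.mat a).mulVec x ∈ sub (tgt a)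

/-- |Gr_e(M)|: the number of subrepresentations of `M` with dimension vector `e`. -/
noncomputable def grCard {k : Type} [Field k] {V A : Type} {src tgt : A → V}
    (M : FinRep k V A src tgt) (e : V → ℤ) : ℕ :=
  Nat.card {U : SubRep M // ∀ v : V, (Module.finrank k (U.sub v) : ℤ) = e v}

/-- Sources of the arrows of the quiver of type Ã_{r,s} (vertices 0,…,r+s−1,
corresponding to the paper's 1,…,r+s): arrows a → a+1 for a < r along the top,
the arrow 0 → r+s−1, and arrows a → a−1 for r < a < r+s along the bottom. -/
def srcA (r s a : ℕ) : ℕ :=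
  if a < r then a else if a = r then 0 else if a < r + s then a else 0

/-- Targets of the arrows of the quiver of type Ã_{r,s}. -/
def tgtA (r s a : ℕ) : ℕ :=
  if a < r then a + 1 else if a = r then r + s - 1 else if a < r + s then a - 1 else 0

/-- The representation of Ã_{r,s} with prescribed dimensions `d` and each arrow
acting by the scalar `c a` (as a constant matrix). -/
def scalarRep (k : Type) [Field k] (r s : ℕ) (d : ℕ → ℕ) (c : ℕ → k) :
    FinRep k ℕ ℕ (srcA r s) (tgtA r s) where
  dim := d
  mat := fun a => Matrix.of fun _ _ => c a

/-!
All three representations are thin (every vertex space has dimension at most one) with scalar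
arrows, so each has at most one subrepresentation of a given dimension vector `e`, and one exists
exactly when `e` is the indicator of a vertex set closed under the nonzero arrows. The identity
thus becomes a statement about vertex sets. In the paper's numbering, a set closed under every
arrow of `Ã_{r,s}` except `r+2 → r+1` is either closed under all arrows, or contains `r+2` but
not `r+1`; in the latter case it avoids the whole top path (which leads to `r+1`), so removing
`r+2` leaves a set closed in the support of `E⁽⁰⁾₂[s−2]`.
-/

open Module

theorem Submodule.eq_of_finrank_eq_of_finrank_le_one {K W : Type*} [DivisionRing K]
    [AddCommGroup W] [Module K W] [FiniteDimensional K W] (hW : finrank K W ≤ 1)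
    {p q : Submodule K W} (h : finrank K p = finrank K q) : p = q := by
  have hp : finrank K p ≤ finrank K W := p.finrank_le
  rcases Nat.le_one_iff_eq_zero_or_eq_one.mp (hp.trans hW) with h0 | h1
  · rw [Submodule.finrank_eq_zero.mp h0,
      Submodule.finrank_eq_zero.mp (h ▸ h0 : finrank K q = 0)]
  · rw [Submodule.eq_top_of_finrank_eq (S := p) (by omega),
      Submodule.eq_top_of_finrank_eq (S := q) (by omega)]

theorem Matrix.of_const_ne_zero_iff {m n α : Type*} [Zero α] {c : α} :
    Matrix.of (fun (_ : m) (_ : n) => c) ≠ 0 ↔ c ≠ 0 ∧ Nonempty m ∧ Nonempty n := by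
  rw [Ne, ← Matrix.ext_iff]
  constructor
  · intro h
    push Not at h
    obtain ⟨i, j, h⟩ := h
    exact ⟨h, ⟨i⟩, ⟨j⟩⟩
  · rintro ⟨h, ⟨i⟩, ⟨j⟩⟩ h'
    exact h (h' i j)

theorem ite_one_zero_eq_add_of_iff_or {P Q R : Prop} [Decidable P] [Decidable Q] [Decidable R]
    (h : P ↔ Q ∨ R) (h' : ¬(Q ∧ R)) :
    (if P then 1 else 0 : ℕ) = (if Q then 1 else 0) + if R then 1 else 0 := by
  by_cases hQ : Q <;> by_cases hR : R <;> simp_all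

theorem SubRep.ext {k : Type} [Field k] {V A : Type} {src tgt : A → V}
    {M : FinRep k V A src tgt} {U U' : SubRep M} (h : U.sub = U'.sub) : U = U' := by
  cases U; cases U'; cases h; rfl

namespace FinRep

variable {k : Type} [Field k] {V A : Type} {src tgt : A → V}

/-- The dimension vectors of subrepresentations of a thin representation. -/
def IsThinSubdim (M : FinRep k V A src tgt) (e : V → ℤ) : Prop :=
  (∀ v, e v = 0 ∨ (e v = 1 ∧ M.dim v = 1)) ∧ ∀ a, M.mat a ≠ 0 → e (src a) = 1 → e (tgt a) = 1

variable {M : FinRep k V A src tgt}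

theorem subsingleton_subRep_of_dim_le_one (hM : ∀ v, M.dim v ≤ 1) (e : V → ℤ) :
    Subsingleton {U : SubRep M // ∀ v, (finrank k (U.sub v) : ℤ) = e v} := by
  refine ⟨fun ⟨U, hU⟩ ⟨U', hU'⟩ => Subtype.ext (SubRep.ext (funext fun v => ?_))⟩
  refine Submodule.eq_of_finrank_eq_of_finrank_le_one ?_ ?_
  · simpa using hM v
  · exact_mod_cast (hU v).trans (hU' v).symm

theorem isThinSubdim_of_subRep (hM : ∀ v, M.dim v ≤ 1) (U : SubRep M) :
    M.IsThinSubdim fun v => (finrank k (U.sub v) : ℤ) := by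
  have hle : ∀ v, finrank k (U.sub v) ≤ M.dim v := fun v =>
    (U.sub v).finrank_le.trans_eq (finrank_fin_fun k)
  have range : ∀ v, finrank k (U.sub v) = 0 ∨ (finrank k (U.sub v) = 1 ∧ M.dim v = 1) :=
    fun v => by have h₁ := hle v; have h₂ := hM v; omega
  refine ⟨fun v => by rcases range v with h | h <;> simp [h], fun a hA hsrc => ?_⟩
  replace hsrc : finrank k (U.sub (src a)) = 1 := by simp only at hsrc; exact_mod_cast hsrc
  have hdim : M.dim (src a) = 1 := ((range (src a)).resolve_left (by omega)).2
  have htop : U.sub (src a) = ⊤ :=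
    Submodule.eq_top_of_finrank_eq (by rw [hsrc, finrank_fin_fun, hdim])
  -- a nonzero matrix is nonzero on some basis vector, whose image then lies in `U.sub (tgt a)`
  classical
  obtain ⟨i, hi⟩ : ∃ i, M.mat a *ᵥ Pi.single i 1 ≠ 0 := by
    by_contra! h
    exact hA (Matrix.ext_of_mulVec_single fun i => (h i).trans (Matrix.zero_mulVec _).symm)
  have hne : U.sub (tgt a) ≠ ⊥ := fun hbot => by
    have := U.compat a (Pi.single i 1) (htop ▸ Submodule.mem_top)
    rw [hbot, Submodule.mem_bot] at this
    exact hi this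
  have : finrank k (U.sub (tgt a)) ≠ 0 := fun h => hne (Submodule.finrank_eq_zero.mp h)
  rcases range (tgt a) with h | h
  · exact absurd h this
  · simp [h.1]

open Classical in
def subRepOfIsThinSubdim {e : V → ℤ} (he : M.IsThinSubdim e) : SubRep M where
  sub v := if e v = 1 then ⊤ else ⊥
  compat a x hx := by
    by_cases htgt : e (tgt a) = 1
    · simp [htgt]
    by_cases hsrc : e (src a) = 1
    · have : M.mat a = 0 := by by_contra hA; exact htgt (he.2 a hA hsrc)
      simp [htgt, this]
    · simp_all

theorem finrank_subRepOfIsThinSubdim {e : V → ℤ} (he : M.IsThinSubdim e) (v : V) :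
    (finrank k ((subRepOfIsThinSubdim he).sub v) : ℤ) = e v := by
  rcases he.1 v with h | ⟨h, hdim⟩
  · have : (subRepOfIsThinSubdim he).sub v = ⊥ := if_neg (by omega)
    simp [this, h]
  · have : (subRepOfIsThinSubdim he).sub v = ⊤ := if_pos h
    rw [this, finrank_top, finrank_fin_fun, hdim, h, Nat.cast_one]

theorem nonempty_subRep_iff (hM : ∀ v, M.dim v ≤ 1) (e : V → ℤ) :
    Nonempty {U : SubRep M // ∀ v, (finrank k (U.sub v) : ℤ) = e v} ↔ M.IsThinSubdim e := by
  constructor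
  · rintro ⟨U, hU⟩
    simpa only [← funext hU] using isThinSubdim_of_subRep hM U
  · exact fun he => ⟨⟨subRepOfIsThinSubdim he, finrank_subRepOfIsThinSubdim he⟩⟩

open Classical in
theorem grCard_eq_ite (hM : ∀ v, M.dim v ≤ 1) (e : V → ℤ) :
    grCard M e = if M.IsThinSubdim e then 1 else 0 := by
  have := subsingleton_subRep_of_dim_le_one hM e
  split_ifs with he
  · have := (nonempty_subRep_iff hM e).mpr he
    exact Nat.card_unique
  · have := not_nonempty_iff.mp (mt (nonempty_subRep_iff hM e).mp he)
    exact Nat.card_of_isEmpty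

end FinRep

section Atilde

variable {k : Type} [Field k] {r s a : ℕ} {e : ℕ → ℤ}

theorem srcA_of_lt (h : a < r) : srcA r s a = a := if_pos h

theorem tgtA_of_lt (h : a < r) : tgtA r s a = a + 1 := if_pos h

theorem srcA_self : srcA r s r = 0 := by simp [srcA]

theorem srcA_of_lt_of_lt (h₁ : r < a) (h₂ : a < r + s) : srcA r s a = a := by
  simp [srcA, h₁.not_gt, h₁.ne', h₂]

theorem tgtA_of_lt_of_lt (h₁ : r < a) (h₂ : a < r + s) : tgtA r s a = a - 1 := by
  simp [tgtA, h₁.not_gt, h₁.ne', h₂]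

theorem srcA_add_one (hs : 1 < s) : srcA r s (r + 1) = r + 1 :=
  srcA_of_lt_of_lt r.lt_add_one (by omega)

theorem tgtA_add_one (hs : 1 < s) : tgtA r s (r + 1) = r :=
  tgtA_of_lt_of_lt r.lt_add_one (by omega)

theorem scalarRep_mat_ne_zero_iff (p : ℕ → Prop) [DecidablePred p] (c : ℕ → k) (a : ℕ) :
    (scalarRep k r s (fun v => if p v then 1 else 0) c).mat a ≠ 0 ↔
      c a ≠ 0 ∧ p (srcA r s a) ∧ p (tgtA r s a) := by
  refine Matrix.of_const_ne_zero_iff.trans ?_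
  simp only [← Fin.pos_iff_nonempty]
  split_ifs <;> simp_all

def IsIndicatorOn (p : ℕ → Prop) (e : ℕ → ℤ) : Prop :=
  ∀ v, e v = 0 ∨ (e v = 1 ∧ p v)

def IsClosedAlong (r s : ℕ) (q : ℕ → Prop) (e : ℕ → ℤ) : Prop :=
  ∀ a, q a → e (srcA r s a) = 1 → e (tgtA r s a) = 1

open Classical in
theorem grCard_scalarRep (p : ℕ → Prop) [DecidablePred p] {c : ℕ → k} {q : ℕ → Prop}
    (hq : ∀ a, c a ≠ 0 ∧ p (srcA r s a) ∧ p (tgtA r s a) ↔ q a) (e : ℕ → ℤ) :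
    grCard (scalarRep k r s (fun v => if p v then 1 else 0) c) e =
      if IsIndicatorOn p e ∧ IsClosedAlong r s q e then 1 else 0 := by
  have hdim : ∀ v, (scalarRep k r s (fun v => if p v then 1 else 0) c).dim v = 1 ↔ p v :=
    fun v => by simp [scalarRep]
  rw [FinRep.grCard_eq_ite (fun v => by simp only [scalarRep]; split_ifs <;> simp)]
  refine if_congr ?_ rfl rfl
  simp only [FinRep.IsThinSubdim, IsIndicatorOn, IsClosedAlong, hdim, ← hq,
    scalarRep_mat_ne_zero_iff, and_imp]

theorem eq_one_of_isClosedAlong_top (he : IsClosedAlong r s (· < r) e) {v : ℕ}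
    (hv : v ≤ r) (h : e v = 1) : e r = 1 := by
  suffices ∀ m, v ≤ m → m ≤ r → e m = 1 from this r hv le_rfl
  intro m hvm
  induction m, hvm using Nat.le_induction with
  | base => exact fun _ => h
  | succ m _ ih =>
    intro hm
    have := he m hm
    rw [srcA_of_lt hm, tgtA_of_lt hm] at this
    exact this (ih (by omega))

theorem isIndicatorOn_remove_iff :
    IsIndicatorOn (fun v => r + 2 ≤ v ∧ v < r + s) (fun v => e v - if v = r + 1 then 1 else 0) ↔
      e (r + 1) = 1 ∧ ∀ v ≠ r + 1, e v = 0 ∨ (e v = 1 ∧ r + 2 ≤ v ∧ v < r + s) := by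
  constructor
  · intro h
    have h₁ := h (r + 1)
    simp only [if_pos, sub_eq_iff_eq_add] at h₁
    exact ⟨by omega, fun v hv => by simpa [hv] using h v⟩
  · rintro ⟨h₁, h⟩ v
    by_cases hv : v = r + 1
    · simp [hv, h₁]
    · simpa [hv] using h v hv

theorem isClosedAlong_remove_iff :
    IsClosedAlong r s (fun a => r + 2 < a ∧ a < r + s)
        (fun v => e v - if v = r + 1 then 1 else 0) ↔
      IsClosedAlong r s (fun a => r + 2 < a ∧ a < r + s) e := by
  refine forall_congr' fun a => imp_congr_right fun ⟨h₁, h₂⟩ => ?_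
  rw [srcA_of_lt_of_lt (by omega) h₂, tgtA_of_lt_of_lt (by omega) h₂]
  simp [show a ≠ r + 1 by omega, show a - 1 ≠ r + 1 by omega]

/-- Dimension vectors of subrepresentations of `E⁽⁰⁾₁[s]`. -/
def IsSubdimE₁ (r s : ℕ) (e : ℕ → ℤ) : Prop :=
  IsIndicatorOn (· < r + s) e ∧ IsClosedAlong r s (fun a => a < r + s ∧ a ≠ r + 1) e

/-- Dimension vectors of subrepresentations of `E(λ)`. -/
def IsSubdimELam (r s : ℕ) (e : ℕ → ℤ) : Prop :=
  IsIndicatorOn (· < r + s) e ∧ IsClosedAlong r s (· < r + s) e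

/-- Dimension vectors of subrepresentations of `E⁽⁰⁾₂[s−2]`. -/
def IsSubdimE₂ (r s : ℕ) (e : ℕ → ℤ) : Prop :=
  IsIndicatorOn (fun v => r + 2 ≤ v ∧ v < r + s) e ∧
    IsClosedAlong r s (fun a => r + 2 < a ∧ a < r + s) e

theorem isSubdimE₁_of_isSubdimE₂_remove (hs : 2 ≤ s)
    (h : IsSubdimE₂ r s fun v => e v - if v = r + 1 then 1 else 0) : IsSubdimE₁ r s e := by
  obtain ⟨⟨h₁, hv⟩, hcl⟩ := h.imp isIndicatorOn_remove_iff.mp isClosedAlong_remove_iff.mp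
  have hlow : ∀ v ≤ r, e v ≠ 1 := fun v hle h => by
    rcases hv v (by omega) with h' | h' <;> omega
  refine ⟨fun v => ?_, fun a ⟨ha, ha'⟩ hsrc => ?_⟩
  · by_cases hvr : v = r + 1
    · exact Or.inr ⟨hvr ▸ h₁, by omega⟩
    · exact (hv v hvr).imp_right fun h => ⟨h.1, h.2.2⟩
  rcases lt_trichotomy a r with har | rfl | har
  · exact absurd hsrc (hlow _ (by rw [srcA_of_lt har]; omega))
  · exact absurd hsrc (hlow _ (by rw [srcA_self]; omega))
  rcases (show a = r + 2 ∨ r + 2 < a by omega) with rfl | har'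
  · rwa [tgtA_of_lt_of_lt (by omega) ha]
  · exact hcl a ⟨har', ha⟩ hsrc

theorem isSubdimE₂_remove_of_isSubdimE₁ (h : IsSubdimE₁ r s e) (h₁ : e (r + 1) = 1)
    (hr : e r ≠ 1) : IsSubdimE₂ r s fun v => e v - if v = r + 1 then 1 else 0 := by
  obtain ⟨hind, hcl⟩ := h
  -- the top path leads to `r`, which is not in the set, so no top vertex is
  have hlow : ∀ v ≤ r, e v ≠ 1 := fun v hv hev =>
    hr (eq_one_of_isClosedAlong_top (fun a ha => hcl a ⟨by omega, by omega⟩) hv hev)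
  refine ⟨isIndicatorOn_remove_iff.mpr ⟨h₁, fun v hv => ?_⟩,
    isClosedAlong_remove_iff.mpr fun a ha => hcl a ⟨ha.2, by omega⟩⟩
  rcases hind v with h | ⟨h, hv'⟩
  · exact Or.inl h
  · exact Or.inr ⟨h, by by_contra; exact hlow v (by omega) h, hv'⟩

theorem IsSubdimELam.eq_one_of_succ_eq_one (hs : 2 ≤ s) (h : IsSubdimELam r s e) :
    e (r + 1) = 1 → e r = 1 := by
  simpa only [srcA_add_one hs, tgtA_add_one hs] using h.2 (r + 1) (by omega)

theorem isSubdimE₁_iff (hs : 2 ≤ s) :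
    IsSubdimE₁ r s e ↔
      IsSubdimELam r s e ∨ IsSubdimE₂ r s fun v => e v - if v = r + 1 then 1 else 0 := by
  refine ⟨fun h => ?_, ?_⟩
  · by_cases hr : e (r + 1) = 1 → e r = 1
    · refine Or.inl ⟨h.1, fun a ha => ?_⟩
      by_cases har : a = r + 1
      · rwa [har, srcA_add_one hs, tgtA_add_one hs]
      · exact h.2 a ⟨ha, har⟩
    · obtain ⟨h₁, hr⟩ := Classical.not_imp.mp hr
      exact Or.inr (isSubdimE₂_remove_of_isSubdimE₁ h h₁ hr)
  · rintro (h | h)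
    · exact ⟨h.1, fun a ha => h.2 a ha.1⟩
    · exact isSubdimE₁_of_isSubdimE₂_remove hs h

theorem not_isSubdimELam_and_isSubdimE₂_remove (hs : 2 ≤ s) :
    ¬(IsSubdimELam r s e ∧ IsSubdimE₂ r s fun v => e v - if v = r + 1 then 1 else 0) := by
  rintro ⟨hLam, h₂⟩
  obtain ⟨h₁, hv⟩ := isIndicatorOn_remove_iff.mp h₂.1
  have := hv r (by omega)
  have := hLam.eq_one_of_succ_eq_one hs h₁
  omega

end Atilde

theorem stmt17_general (k : Type) [Field k] (r s : ℕ)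
    (hs : 2 ≤ s) (lam : k) (hlam : lam ≠ 0) (e : ℕ → ℤ) :
    grCard (scalarRep k r s (fun v => if v < r + s then 1 else 0)
        (fun a => if a = r + 1 then 0 else if a < r + s then 1 else 0)) e
      = grCard (scalarRep k r s (fun v => if v < r + s then 1 else 0)
          (fun a => if a = r then lam else if a < r + s then 1 else 0)) e
        + grCard (scalarRep k r s
            (fun v => if r + 2 ≤ v ∧ v < r + s then 1 else 0)
            (fun a => if a < r + s then 1 else 0))
          (fun v => e v - if v = r + 1 then 1 else 0) := by
  classical
  rw [grCard_scalarRep (· < r + s) (q := fun a => a < r + s ∧ a ≠ r + 1) ?arrows₁,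
    grCard_scalarRep (· < r + s) (q := (· < r + s)) ?arrowsLam,
    grCard_scalarRep (fun v => r + 2 ≤ v ∧ v < r + s)
      (q := fun a => r + 2 < a ∧ a < r + s) ?arrows₂]
  · exact ite_one_zero_eq_add_of_iff_or (isSubdimE₁_iff hs)
      (not_isSubdimELam_and_isSubdimE₂_remove hs)
  all_goals intro a; simp only [srcA, tgtA]; split_ifs <;> simp_all <;> omega

/-- identity (★) of Section 6.1: for the quiver Q of type Ã_{r,s}
over a finite field k, E⁽⁰⁾₁[s] the indecomposable regular module of dimension
vector δ = (1,…,1) in the non-homogeneous tube T₀ (all arrows act by 1 except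
the bottom arrow into vertex r+1, which acts by 0), E(λ) a degree-1 regular
simple in a homogeneous tube (all arrows act by 1 except the arrow 1 → r+s,
which acts by λ ≠ 0), and E⁽⁰⁾₂[s−2] the regular module with quasi-socle
E⁽⁰⁾₂ = S_{r+3} and quasi-length s−2 (supported on the bottom vertices
r+3,…,r+s, indices r+2,…,r+s−1, all arrows there acting by 1): for every
dimension vector e,
|Gr_e(E⁽⁰⁾₁[s])| = |Gr_e(E(λ))| + |Gr_{e − dim S_{r+2}}(E⁽⁰⁾₂[s−2])|. -/
theorem stmt17 (k : Type) [Field k] [Fintype k] (r s : ℕ)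
    (hr : 1 ≤ r) (hs : 2 ≤ s) (lam : k) (hlam : lam ≠ 0) (e : ℕ → ℤ) :
    grCard (scalarRep k r s (fun v => if v < r + s then 1 else 0)
        (fun a => if a = r + 1 then 0 else if a < r + s then 1 else 0)) e
      = grCard (scalarRep k r s (fun v => if v < r + s then 1 else 0)
          (fun a => if a = r then lam else if a < r + s then 1 else 0)) e
        + grCard (scalarRep k r s
            (fun v => if r + 2 ≤ v ∧ v < r + s then 1 else 0)
            (fun a => if a < r + s then 1 else 0))
          (fun v => e v - if v = r + 1 then 1 else 0) :=
  stmt17_general k r s hs lam hlam e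
end
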